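/- arXiv:2604.23211 — 2 statements merged into one kernel-verified Lean document; each statement's English description precedes it below -/
import Mathlib

section
/- For every element g of the infinite dihedral group D∞, its Coxeter length ℓ(g) equals the explicit formula: ℓ(r(k)) = 2|k|, and ℓ(sr(k)) = 2|k| − 1 if k > 0, and ℓ(sr(k)) = 2|k| + 1 if k ≤ 0. -/
open DihedralGroup CoxeterSystem

/-- The infinite dihedral group `D∞`, realized as `DihedralGroup 0`. -/
abbrev Dinf := DihedralGroup 0

/-- View an element of `ZMod 0` as an integer. -/
def toInt (k : ZMod 0) : ℤ := k

/-- The Coxeter matrix of type `A₁⁽¹⁾`: diagonal entries `1`, off-diagonal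
entries `0` (encoding infinite order). -/
def Mmat : CoxeterMatrix (Fin 2) where
  M := !![1, 0; 0, 1]
  isSymm := by decide
  diagonal := by decide
  off_diagonal := by
    intro i i' h
    fin_cases i <;> fin_cases i' <;> first | exact absurd rfl h | decide | simp

/-- The generator index `0` (resp. `1`) corresponds to the geometric
reflection `s₀ = sr 0` (resp. `s₁ = sr 1`). -/
def toGen : Fin 2 → Dinf := fun i => if i = 0 then sr 0 else sr 1

/-- The product in `D∞` of a word in the two generators `s₀, s₁`. -/
def wprod (w : List (Fin 2)) : Dinf := (w.map toGen).prod

/-- The explicit reduced word (an alternating word in `s₀` and `s₁`) for an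
element of `D∞`. -/
def reducedWord : Dinf → List (Fin 2)
  | .r k => if 0 ≤ toInt k then alternatingWord 0 1 (2 * (toInt k).natAbs)
      else alternatingWord 1 0 (2 * (toInt k).natAbs)
  | .sr k => if 0 < toInt k then alternatingWord 0 1 (2 * (toInt k).natAbs - 1)
      else alternatingWord 1 0 (2 * (toInt k).natAbs + 1)

/-- The degree map `φ : D∞ → ℕ²`, counting occurrences of `s₀` and of `s₁` in
a reduced word. -/
def φ (g : Dinf) : ℕ × ℕ := ((reducedWord g).count 0, (reducedWord g).count 1)

/-- The explicit (computable) length function on `D∞`. -/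
def cLength : Dinf → ℕ
  | .r k => 2 * (toInt k).natAbs
  | .sr k => if 0 < toInt k then 2 * (toInt k).natAbs - 1 else 2 * (toInt k).natAbs + 1

/-- `t` is a reflection of `D∞`, i.e. an element of the form `sr k`. -/
def IsReflectionD (t : Dinf) : Prop := ∃ k, t = sr k

/-- The moment graph of `D∞` has an edge `u → v` of degree `α` iff
`v = u * s_α` where `s_α` is the (root) reflection of degree `α`. -/
def IsEdge (u v : Dinf) (α : ℕ × ℕ) : Prop := ∃ t : Dinf, IsReflectionD t ∧ φ t = α ∧ v = u * t

/-- Increasing chains in the moment graph of `D∞`: the Coxeter length strictly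
increases along each edge, and the degree of the chain is the sum of the
degrees of its edges. -/
inductive Chain (cs : CoxeterSystem Mmat Dinf) : Dinf → Dinf → ℕ × ℕ → Prop where
  | refl (u : Dinf) : Chain cs u u 0
  | step {u v w : Dinf} {d α : ℕ × ℕ} : Chain cs u v d → IsEdge v w α →
      cs.length v < cs.length w → Chain cs u w (d + α)

/-- Bruhat order on `D∞`: `u ≤ v` iff there is an increasing chain from `u`
to `v` in the moment graph. -/
def BruhatLE (cs : CoxeterSystem Mmat Dinf) (u v : Dinf) : Prop := ∃ d, Chain cs u v d

/-- Strict Bruhat order on `D∞`. -/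
def BruhatLT (cs : CoxeterSystem Mmat Dinf) (u v : Dinf) : Prop :=
  BruhatLE cs u v ∧ u ≠ v

/-- `v` is reachable from `u` by an increasing chain of degree at most `d`. -/
def Reachable (cs : CoxeterSystem Mmat Dinf) (u : Dinf) (d : ℕ × ℕ) (v : Dinf) : Prop :=
  ∃ d', d' ≤ d ∧ Chain cs u v d'

/-- The algebraic set `A_d(u) = { v | ℓ(uv) = ℓ(u) + ℓ(v), φ(v) ≤ d }`. -/
def Ad (cs : CoxeterSystem Mmat Dinf) (u : Dinf) (d : ℕ × ℕ) : Set Dinf :=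
  { v | cs.length (u * v) = cs.length u + cs.length v ∧ φ v ≤ d }

/-- `w` is maximal in `S` with respect to the Bruhat order. -/
def IsMaximalIn (cs : CoxeterSystem Mmat Dinf) (w : Dinf) (S : Set Dinf) : Prop :=
  w ∈ S ∧ ∀ v ∈ S, ¬ BruhatLT cs w v

/-- The combinatorial curve neighborhood `Γ_d(u)`: the Bruhat-maximal elements
among those reachable from `u` by an increasing chain of degree `≤ d`. -/
def CurveNeighborhood (cs : CoxeterSystem Mmat Dinf) (u : Dinf) (d : ℕ × ℕ) : Set Dinf :=
  { v | Reachable cs u d v ∧ ∀ v', Reachable cs u d v' → ¬ BruhatLT cs v v' }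


section Aux

lemma toInt_sub' (a b : ZMod 0) : toInt (a - b) = toInt a - toInt b := rfl
lemma toInt_add' (a b : ZMod 0) : toInt (a + b) = toInt a + toInt b := rfl
lemma toInt_zero' : toInt 0 = 0 := rfl
lemma toInt_one' : toInt 1 = 1 := rfl
lemma toInt_neg' (a : ZMod 0) : toInt (-a) = -toInt a := rfl
lemma toInt_natCast' (n : ℕ) : toInt ((n : ℤ) : ZMod 0) = n := rfl

lemma cLength_r (k : ZMod 0) : cLength (r k) = 2 * (toInt k).natAbs := rfl
lemma cLength_sr (k : ZMod 0) : cLength (sr k) =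
    if 0 < toInt k then 2 * (toInt k).natAbs - 1 else 2 * (toInt k).natAbs + 1 := rfl

lemma cLength_toGen_mul (i : Fin 2) (g : Dinf) :
    cLength (toGen i * g) ≤ cLength g + 1 := by
  fin_cases i <;> cases g <;>
    simp only [toGen, Fin.mk_zero, Fin.mk_one, Fin.isValue, reduceIte, one_ne_zero,
      if_true, if_false, sr_mul_r, sr_mul_sr,
      cLength_r, cLength_sr, toInt_sub', toInt_add', toInt_zero', toInt_one', zero_add] <;>
    split_ifs <;> grind

lemma cLength_wordProd_le (cs : CoxeterSystem Mmat Dinf)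
    (h0 : cs.simple 0 = sr 0) (h1 : cs.simple 1 = sr 1) (w : List (Fin 2)) :
    cLength (cs.wordProd w) ≤ w.length := by
  induction w with
  | nil =>
      rw [cs.wordProd_nil, one_def]
      exact Nat.le_refl _
  | cons i t ih =>
      rw [cs.wordProd_cons]
      have hs : cs.simple i = toGen i := by
        fin_cases i <;> simp [toGen, h0, h1]
      rw [hs]
      calc cLength (toGen i * cs.wordProd t) ≤ cLength (cs.wordProd t) + 1 :=
            cLength_toGen_mul i _
        _ ≤ t.length + 1 := by omega
        _ = (i :: t).length := rfl

lemma length_le_cLength (cs : CoxeterSystem Mmat Dinf)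
    (h0 : cs.simple 0 = sr 0) (h1 : cs.simple 1 = sr 1) (g : Dinf) :
    cs.length g ≤ cLength g := by
  have hs0 : cs.length (sr 0) ≤ 1 := h0 ▸ (cs.length_simple 0).le
  have hs1 : cs.length (sr 1) ≤ 1 := h1 ▸ (cs.length_simple 1).le
  have hr1 : cs.length (r (1 : ℤ)) ≤ 2 := by
    have h : (r (1 : ℤ) : Dinf) = sr 0 * sr 1 := by
      rw [sr_mul_sr]; exact congrArg r (by rfl)
    rw [h]
    calc cs.length (sr 0 * sr 1) ≤ cs.length (sr 0) + cs.length (sr 1) :=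
          cs.length_mul_le _ _
      _ ≤ 2 := by omega
  have hrm1 : cs.length (r (-1 : ℤ)) ≤ 2 := by
    have h : (r (-1 : ℤ) : Dinf) = sr 1 * sr 0 := by
      rw [sr_mul_sr]; exact congrArg r (by rfl)
    rw [h]
    calc cs.length (sr 1 * sr 0) ≤ cs.length (sr 1) + cs.length (sr 0) :=
          cs.length_mul_le _ _
      _ ≤ 2 := by omega
  have hrpos : ∀ n : ℕ, cs.length (r ((n : ℤ) : ZMod 0)) ≤ 2 * n := by
    intro n
    induction n with
    | zero =>
        have h : (r ((0 : ℕ) : ℤ) : Dinf) = 1 := by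
          rw [one_def]; exact congrArg r (by rfl)
        rw [h, cs.length_one]
    | succ n ih =>
        have h : (r (((n+1 : ℕ) : ℤ) : ZMod 0) : Dinf) = r ((n : ℤ) : ZMod 0) * r (1 : ℤ) := by
          exact congrArg r (show ((n+1:ℕ):ℤ) = (n:ℤ) + 1 by omega)
        rw [h]
        calc cs.length (r ((n : ℤ) : ZMod 0) * r (1:ℤ))
            ≤ cs.length (r ((n : ℤ) : ZMod 0)) + cs.length (r (1:ℤ)) := cs.length_mul_le _ _
          _ ≤ 2 * (n + 1) := by omega
  have hrneg : ∀ n : ℕ, cs.length (r ((-(n : ℤ)) : ZMod 0)) ≤ 2 * n := by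
    intro n
    induction n with
    | zero =>
        have h : (r (-((0 : ℕ) : ℤ)) : Dinf) = 1 := by
          rw [one_def]; exact congrArg r (by rfl)
        rw [h, cs.length_one]
    | succ n ih =>
        have h : (r ((-((n+1 : ℕ) : ℤ)) : ZMod 0) : Dinf)
            = r ((-(n : ℤ)) : ZMod 0) * r (-1 : ℤ) := by
          exact congrArg r (show (-((n+1:ℕ):ℤ)) = -(n:ℤ) + -1 by omega)
        rw [h]
        calc cs.length (r ((-(n : ℤ)) : ZMod 0) * r (-1:ℤ))
            ≤ cs.length (r ((-(n : ℤ)) : ZMod 0)) + cs.length (r (-1:ℤ)) := cs.length_mul_le _ _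
          _ ≤ 2 * (n + 1) := by omega
  cases g with
  | r k =>
      rcases le_or_gt 0 (toInt k) with h | h
      · have hk : (k : ZMod 0) = (((toInt k).natAbs : ℤ) : ZMod 0) :=
          (Int.natAbs_of_nonneg h).symm
        rw [cLength_r, hk]
        exact hrpos (toInt k).natAbs
      · have hk : (k : ZMod 0) = ((-(((toInt k).natAbs : ℕ) : ℤ)) : ZMod 0) := by
          have : toInt k = -((toInt k).natAbs : ℤ) := by omega
          exact this
        rw [cLength_r]
        have h2 := hrneg (toInt k).natAbs
        rwa [← hk] at h2
  | sr k =>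
      rcases le_or_gt (toInt k) 0 with h | h
      · -- sr k = r (-k) * sr 0
        have hdec : (sr k : Dinf) = r (-k) * sr 0 := by
          rw [r_mul_sr]; exact congrArg sr (by ring)
        have hk : ((-k : ZMod 0)) = ((((toInt k).natAbs : ℕ) : ℤ) : ZMod 0) := by
          have : -toInt k = ((toInt k).natAbs : ℤ) := by omega
          exact this
        rw [cLength_sr, if_neg (by omega), hdec, hk]
        calc cs.length (r ((((toInt k).natAbs : ℕ) : ℤ) : ZMod 0) * sr 0)
            ≤ cs.length (r ((((toInt k).natAbs : ℕ) : ℤ) : ZMod 0)) + cs.length (sr 0) :=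
              cs.length_mul_le _ _
          _ ≤ 2 * (toInt k).natAbs + 1 := by
              have := hrpos (toInt k).natAbs; omega
      · -- sr k = r (1 - k) * sr 1
        have hdec : (sr k : Dinf) = r (1 - k) * sr 1 := by
          rw [r_mul_sr]; exact congrArg sr (by ring)
        have hk : ((1 - k : ZMod 0)) = ((-((((toInt k).natAbs - 1 : ℕ)) : ℤ)) : ZMod 0) := by
          have : 1 - toInt k = -((((toInt k).natAbs - 1 : ℕ)) : ℤ) := by omega
          exact this
        rw [cLength_sr, if_pos h, hdec, hk]
        calc cs.length (r ((-((((toInt k).natAbs - 1 : ℕ)) : ℤ)) : ZMod 0) * sr 1)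
            ≤ cs.length (r ((-((((toInt k).natAbs - 1 : ℕ)) : ℤ)) : ZMod 0)) + cs.length (sr 1) :=
              cs.length_mul_le _ _
          _ ≤ 2 * (toInt k).natAbs - 1 := by
              have := hrneg ((toInt k).natAbs - 1); omega

lemma length_eq_cLength (cs : CoxeterSystem Mmat Dinf)
    (h0 : cs.simple 0 = sr 0) (h1 : cs.simple 1 = sr 1) (g : Dinf) :
    cs.length g = cLength g := by
  refine le_antisymm (length_le_cLength cs h0 h1 g) ?_
  obtain ⟨w, hw, rfl⟩ := cs.exists_reduced_word g
  calc cLength (cs.wordProd w) ≤ w.length := cLength_wordProd_le cs h0 h1 w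
    _ = cs.length (cs.wordProd w) := hw.symm

end Aux

/-- The Coxeter length on `D∞` is given by the explicit formula:
`ℓ(r k) = 2|k|`, `ℓ(sr k) = 2|k| - 1` if `k > 0` and `2|k| + 1` if `k ≤ 0`. -/
theorem stmt1 (cs : CoxeterSystem Mmat Dinf)
    (h0 : cs.simple 0 = sr 0) (h1 : cs.simple 1 = sr 1) :
    (∀ k : ZMod 0, cs.length (r k) = 2 * (toInt k).natAbs) ∧
    (∀ k : ZMod 0, 0 < toInt k → cs.length (sr k) = 2 * (toInt k).natAbs - 1) ∧
    (∀ k : ZMod 0, toInt k ≤ 0 → cs.length (sr k) = 2 * (toInt k).natAbs + 1) := by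
  refine ⟨fun k => ?_, fun k hk => ?_, fun k hk => ?_⟩
  · rw [length_eq_cLength cs h0 h1, cLength_r]
  · rw [length_eq_cLength cs h0 h1, cLength_sr, if_pos hk]
  · rw [length_eq_cLength cs h0 h1, cLength_sr, if_neg (by omega)]
end

section
/- Conversely, if there is an increasing chain of degree d' ≤ d from u to v in the moment graph of D∞, then u⁻¹v ∈ A_d(u) up to maximality: there exists w ∈ A_d(u) maximal such that v ≤ u·w in Bruhat order. -/
open DihedralGroup CoxeterSystem

section Model

/-- Integer coordinate on `D∞`. -/
def N : Dinf → ℤ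
  | .r k => 2 * toInt k
  | .sr k => 1 - 2 * toInt k

/-- Inverse of `N`. -/
def E (j : ℤ) : Dinf := if j % 2 = 0 then .r ((j/2 : ℤ) : ZMod 0) else .sr (((1-j)/2 : ℤ) : ZMod 0)

/-- Multiplication in coordinates. -/
def M (i j : ℤ) : ℤ := if i % 2 = 0 then i + j else i - j

/-- Degree in coordinates. -/
def φZ (j : ℤ) : ℕ × ℕ :=
  if 0 ≤ j then ((j.natAbs + 1)/2, j.natAbs/2) else (j.natAbs/2, (j.natAbs+1)/2)

theorem toInt_intCast (n : ℤ) : toInt ((n : ℤ) : ZMod 0) = n := rfl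

theorem N_E (j : ℤ) : N (E j) = j := by
  unfold E
  by_cases h : j % 2 = 0
  · rw [if_pos h]; show 2 * toInt ((j/2 : ℤ) : ZMod 0) = j
    rw [toInt_intCast]; omega
  · rw [if_neg h]; show 1 - 2 * toInt (((1-j)/2 : ℤ) : ZMod 0) = j
    rw [toInt_intCast]; omega

theorem E_N (g : Dinf) : E (N g) = g := by
  cases g with
  | r k =>
    show E (2 * toInt k) = _
    unfold E
    rw [if_pos (by omega)]
    congr 1
    show (((2 * toInt k)/2 : ℤ) : ZMod 0) = k
    rw [(by omega : (2 * toInt k)/2 = toInt k)]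
    rfl
  | sr k =>
    show E (1 - 2 * toInt k) = _
    unfold E
    rw [if_neg (by omega)]
    congr 1
    show (((1 - (1 - 2 * toInt k))/2 : ℤ) : ZMod 0) = k
    rw [(by omega : (1 - (1 - 2 * toInt k))/2 = toInt k)]
    rfl

theorem N_inj {g h : Dinf} (h' : N g = N h) : g = h := by
  rw [← E_N g, ← E_N h, h']

theorem N_mul (g h : Dinf) : N (g * h) = M (N g) (N h) := by
  cases g with
  | r i => cases h with
    | r j =>
      show N (.r (i + j)) = M (2 * toInt i) (2 * toInt j)
      show 2 * toInt (i+j) = _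
      have : toInt (i+j) = toInt i + toInt j := rfl
      rw [this]; unfold M; split <;> omega
    | sr j =>
      show N (.sr (j - i)) = M (2 * toInt i) (1 - 2 * toInt j)
      show 1 - 2 * toInt (j - i) = _
      have : toInt (j - i) = toInt j - toInt i := rfl
      rw [this]; unfold M; split <;> omega
  | sr i => cases h with
    | r j =>
      show N (.sr (i + j)) = M (1 - 2 * toInt i) (2 * toInt j)
      show 1 - 2 * toInt (i+j) = _
      have : toInt (i+j) = toInt i + toInt j := rfl
      rw [this]; unfold M; split <;> omega
    | sr j =>
      show N (.r (j - i)) = M (1 - 2 * toInt i) (1 - 2 * toInt j)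
      show 2 * toInt (j - i) = _
      have : toInt (j - i) = toInt j - toInt i := rfl
      rw [this]; unfold M; split <;> omega

theorem cLength_eq (g : Dinf) : cLength g = (N g).natAbs := by
  cases g with
  | r k => show 2 * (toInt k).natAbs = (2 * toInt k).natAbs; omega
  | sr k =>
    show (if 0 < toInt k then 2 * (toInt k).natAbs - 1 else 2 * (toInt k).natAbs + 1)
        = (1 - 2 * toInt k).natAbs
    split <;> omega

end Model
section Words

theorem toGen_zero : toGen 0 = .sr 0 := rfl
theorem toGen_one : toGen 1 = .sr 1 := rfl

theorem N_toGen_zero : N (toGen 0) = 1 := by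
  rw [toGen_zero]; show 1 - 2 * toInt ((0:ℤ) : ZMod 0) = 1; rw [toInt_intCast]; ring

theorem N_toGen_one : N (toGen 1) = -1 := by
  rw [toGen_one]; show 1 - 2 * toInt ((1:ℤ) : ZMod 0) = -1; rw [toInt_intCast]; ring

theorem wprod_nil : wprod [] = 1 := rfl

theorem wprod_concat (l : List (Fin 2)) (i : Fin 2) :
    wprod (l.concat i) = wprod l * toGen i := by
  unfold wprod
  rw [List.concat_eq_append, List.map_append, List.prod_append]
  simp

theorem N_one : N 1 = 0 := by
  rw [DihedralGroup.one_def]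
  show 2 * toInt ((0:ℤ) : ZMod 0) = 0
  rw [toInt_intCast]; ring

theorem N_wprod_aw (m : ℕ) :
    N (wprod (alternatingWord 0 1 m)) = (if m % 2 = 0 then (m:ℤ) else -(m:ℤ)) ∧
    N (wprod (alternatingWord 1 0 m)) = (if m % 2 = 0 then -(m:ℤ) else (m:ℤ)) := by
  induction m with
  | zero => simp [alternatingWord, wprod_nil, N_one]
  | succ m ih =>
    obtain ⟨ih1, ih2⟩ := ih
    constructor
    · rw [alternatingWord_succ, wprod_concat, N_mul, ih2, N_toGen_one]
      unfold M; split <;> split <;> split <;> omega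
    · rw [alternatingWord_succ, wprod_concat, N_mul, ih1, N_toGen_zero]
      unfold M; split <;> split <;> split <;> omega

theorem wprod_reducedWord (g : Dinf) : wprod (reducedWord g) = g := by
  apply N_inj
  cases g with
  | r k =>
    show N (wprod (if 0 ≤ toInt k then _ else _)) = N (.r k)
    show _ = 2 * toInt k
    split
    · rw [(N_wprod_aw _).1]; split <;> omega
    · rw [(N_wprod_aw _).2]; split <;> omega
  | sr k =>
    show N (wprod (if 0 < toInt k then _ else _)) = N (.sr k)
    show _ = 1 - 2 * toInt k
    split
    · rw [(N_wprod_aw _).1]; split <;> omega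
    · rw [(N_wprod_aw _).2]; split <;> omega

theorem count_aw (m : ℕ) :
    ((alternatingWord (0:Fin 2) 1 m).count 0 = m / 2 ∧
      (alternatingWord (0:Fin 2) 1 m).count 1 = (m+1) / 2) ∧
    ((alternatingWord (1:Fin 2) 0 m).count 0 = (m+1) / 2 ∧
      (alternatingWord (1:Fin 2) 0 m).count 1 = m / 2) := by
  induction m with
  | zero => simp [alternatingWord]
  | succ m ih =>
    obtain ⟨⟨ih1, ih2⟩, ih3, ih4⟩ := ih
    refine ⟨⟨?_, ?_⟩, ?_, ?_⟩ <;>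
      rw [alternatingWord_succ, List.concat_eq_append, List.count_append] <;>
      simp [ih1, ih2, ih3, ih4] <;> omega

theorem φ_eq (g : Dinf) : φ g = φZ (N g) := by
  cases g with
  | r k =>
    show (List.count 0 (if 0 ≤ toInt k then _ else _), List.count 1 (if 0 ≤ toInt k then _ else _))
      = φZ (2 * toInt k)
    unfold φZ
    split
    · rw [(count_aw _).1.1, (count_aw _).1.2]
      rw [if_pos (by omega)]
      rw [Prod.mk.injEq]; omega
    · rw [(count_aw _).2.1, (count_aw _).2.2]
      rw [if_neg (by omega)]
      rw [Prod.mk.injEq]; omega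
  | sr k =>
    show (List.count 0 (if 0 < toInt k then _ else _), List.count 1 (if 0 < toInt k then _ else _))
      = φZ (1 - 2 * toInt k)
    unfold φZ
    split
    · rw [(count_aw _).1.1, (count_aw _).1.2]
      rw [if_neg (by omega)]
      rw [Prod.mk.injEq]; omega
    · rw [(count_aw _).2.1, (count_aw _).2.2]
      rw [if_pos (by omega)]
      rw [Prod.mk.injEq]; omega

theorem length_reducedWord (g : Dinf) : (reducedWord g).length = cLength g := by
  cases g with
  | r k =>
    show (if 0 ≤ toInt k then _ else _ : List (Fin 2)).length = 2 * (toInt k).natAbs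
    split <;> rw [length_alternatingWord]
  | sr k =>
    show (if 0 < toInt k then _ else _ : List (Fin 2)).length
        = if 0 < toInt k then 2 * (toInt k).natAbs - 1 else 2 * (toInt k).natAbs + 1
    split <;> rw [length_alternatingWord]

end Words
section Length

variable (cs : CoxeterSystem Mmat Dinf)

theorem natAbs_M_le (i j : ℤ) : (M i j).natAbs ≤ i.natAbs + j.natAbs := by
  unfold M; split <;> omega

theorem cLength_mul_le (g h : Dinf) : cLength (g * h) ≤ cLength g + cLength h := by
  rw [cLength_eq, cLength_eq, cLength_eq, N_mul]; exact natAbs_M_le _ _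

theorem cLength_toGen (i : Fin 2) : cLength (toGen i) = 1 := by
  match i with
  | 0 => rw [cLength_eq, N_toGen_zero]; rfl
  | 1 => rw [cLength_eq, N_toGen_one]; rfl

theorem cLength_one : cLength 1 = 0 := by rw [cLength_eq, N_one]; rfl

theorem cLength_wprod_le (l : List (Fin 2)) : cLength (wprod l) ≤ l.length := by
  induction l with
  | nil => rw [wprod_nil, cLength_one]; exact Nat.zero_le _
  | cons i l ih =>
    have : wprod (i :: l) = toGen i * wprod l := by
      unfold wprod; rw [List.map_cons, List.prod_cons]
    rw [this]
    calc cLength (toGen i * wprod l) ≤ cLength (toGen i) + cLength (wprod l) :=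
          cLength_mul_le _ _
      _ ≤ 1 + l.length := by rw [cLength_toGen]; omega
      _ = (i :: l).length := by simp [Nat.add_comm]

theorem simple_eq (h0 : cs.simple 0 = .sr 0) (h1 : cs.simple 1 = .sr 1) (i : Fin 2) :
    cs.simple i = toGen i := by
  match i with
  | 0 => rw [h0]; rfl
  | 1 => rw [h1]; rfl

theorem wordProd_eq (h0 : cs.simple 0 = .sr 0) (h1 : cs.simple 1 = .sr 1) (l : List (Fin 2)) :
    cs.wordProd l = wprod l := by
  unfold CoxeterSystem.wordProd wprod
  congr 1
  exact List.map_congr_left (fun i _ => simple_eq cs h0 h1 i)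

theorem length_eq (h0 : cs.simple 0 = .sr 0) (h1 : cs.simple 1 = .sr 1) (g : Dinf) :
    cs.length g = cLength g := by
  refine Nat.le_antisymm ?_ ?_
  · have hg : g = cs.wordProd (reducedWord g) := by
      rw [wordProd_eq cs h0 h1, wprod_reducedWord]
    calc cs.length g = cs.length (cs.wordProd (reducedWord g)) := by rw [← hg]
      _ ≤ (reducedWord g).length := cs.length_wordProd_le _
      _ = cLength g := length_reducedWord g
  · obtain ⟨ω, hlen, hw⟩ := cs.exists_reduced_word g
    calc cLength g = cLength (wprod ω) := by rw [← wordProd_eq cs h0 h1, ← hw]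
      _ ≤ ω.length := cLength_wprod_le ω
      _ = cs.length g := by rw [hw]; exact Eq.symm hlen

end Length
section Bruhat

variable (cs : CoxeterSystem Mmat Dinf)

theorem isReflection_E {o : ℤ} (h : o % 2 ≠ 0) : IsReflectionD (E o) := by
  unfold E; rw [if_neg h]; exact ⟨_, rfl⟩

theorem N_E_odd {t : Dinf} (h : IsReflectionD t) : N t % 2 ≠ 0 := by
  obtain ⟨k, rfl⟩ := h
  show (1 - 2 * toInt k) % 2 ≠ 0
  omega

variable {cs}

theorem chain_le (h0 : cs.simple 0 = .sr 0) (h1 : cs.simple 1 = .sr 1)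
    {u v : Dinf} {d₀ : ℕ × ℕ} (hc : Chain cs u v d₀) :
    u = v ∨ cLength u < cLength v := by
  induction hc with
  | refl => exact Or.inl rfl
  | step hc he hlt ih =>
    right
    rw [length_eq cs h0 h1, length_eq cs h0 h1] at hlt
    rcases ih with rfl | h
    · exact hlt
    · exact h.trans hlt

theorem chain_step_single (h0 : cs.simple 0 = .sr 0) (h1 : cs.simple 1 = .sr 1)
    {u x y : Dinf} {d₀ : ℕ × ℕ} (hc : Chain cs u x d₀)
    (hpar : (N x + N y) % 2 ≠ 0) (hl : cLength x < cLength y) :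
    Chain cs u y (d₀ + φ (E (if N x % 2 = 0 then N y - N x else N x - N y))) := by
  set o : ℤ := if N x % 2 = 0 then N y - N x else N x - N y with ho
  have hodd : o % 2 ≠ 0 := by rw [ho]; split <;> omega
  have hy : y = x * E o := by
    apply N_inj
    rw [N_mul, N_E]
    unfold M
    rw [ho]
    split <;> omega
  refine Chain.step hc ⟨E o, isReflection_E hodd, rfl, hy⟩ ?_
  rw [length_eq cs h0 h1, length_eq cs h0 h1]
  exact hl

theorem bruhatLE_of (h0 : cs.simple 0 = .sr 0) (h1 : cs.simple 1 = .sr 1)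
    {x y : Dinf} (h : x = y ∨ cLength x < cLength y) : BruhatLE cs x y := by
  rcases h with rfl | hl
  · exact ⟨0, Chain.refl x⟩
  by_cases hpar : (N x + N y) % 2 ≠ 0
  · exact ⟨_, chain_step_single h0 h1 (Chain.refl x) hpar hl⟩
  · set z : Dinf := E (if 0 ≤ N x then N x + 1 else N x - 1) with hz
    have hNz : N z = if 0 ≤ N x then N x + 1 else N x - 1 := N_E _
    have hxz : (N x + N z) % 2 ≠ 0 := by rw [hNz]; split <;> omega
    have hpar2 : (N x + N y) % 2 = 0 := by omega
    have hlz : cLength x < cLength z := by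
      rw [cLength_eq, cLength_eq, hNz]; split <;> omega
    have hlzy : cLength z < cLength y := by
      rw [cLength_eq, cLength_eq, hNz]
      rw [cLength_eq, cLength_eq] at hl
      split <;> omega
    have hzy : (N z + N y) % 2 ≠ 0 := by
      rw [hNz]
      have := hpar
      split <;> omega
    exact ⟨_, chain_step_single h0 h1
      (chain_step_single h0 h1 (Chain.refl x) hxz hlz) hzy hlzy⟩

theorem bruhatLE_iff (h0 : cs.simple 0 = .sr 0) (h1 : cs.simple 1 = .sr 1)
    (x y : Dinf) : BruhatLE cs x y ↔ (x = y ∨ cLength x < cLength y) :=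
  ⟨fun ⟨_, hc⟩ => chain_le h0 h1 hc, bruhatLE_of h0 h1⟩

theorem not_bruhatLT (h0 : cs.simple 0 = .sr 0) (h1 : cs.simple 1 = .sr 1)
    {x y : Dinf} (h : cLength y ≤ cLength x) : ¬ BruhatLT cs x y := by
  rintro ⟨hle, hne⟩
  rcases (bruhatLE_iff h0 h1 x y).1 hle with rfl | hlt
  · exact hne rfl
  · omega

end Bruhat
section Arith

theorem M_zero_left (j : ℤ) : M 0 j = j := by unfold M; simp

theorem M_assoc (a b c : ℤ) : M (M a b) c = M a (M b c) := by
  unfold M; split_ifs <;> omega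

theorem phiZ_subadd (i j : ℤ) : φZ (M i j) ≤ φZ i + φZ j := by
  unfold φZ M
  split_ifs <;> simp only [Prod.mk_add_mk, Prod.mk_le_mk] <;> omega

theorem phiZ_mono {i j : ℤ} (h : i.natAbs < j.natAbs) : φZ i ≤ φZ j := by
  unfold φZ
  split_ifs <;> simp only [Prod.mk_le_mk] <;> omega

/-- The additive element on `u`'s side with given length. -/
def cand (a : ℤ) (K : ℕ) : ℤ :=
  if a % 2 = 0 then (if 0 < a then (K:ℤ) else -(K:ℤ))
  else (if 0 < a then -(K:ℤ) else (K:ℤ))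

theorem cand_add (a : ℤ) (ha : a ≠ 0) (K : ℕ) :
    (M a (cand a K)).natAbs = a.natAbs + (cand a K).natAbs ∧ (cand a K).natAbs = K := by
  unfold cand M; split_ifs <;> constructor <;> omega

theorem cand_M (a : ℤ) (ha : a ≠ 0) (K : ℕ) :
    M a (cand a K) = if 0 < a then ((a.natAbs + K : ℕ) : ℤ) else -((a.natAbs + K : ℕ) : ℤ) := by
  unfold cand M; split_ifs <;> omega

theorem eq_cand (a m : ℤ) (ha : a ≠ 0)
    (hadd : (M a m).natAbs = a.natAbs + m.natAbs) : m = cand a m.natAbs := by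
  unfold cand M at *; split_ifs at * <;> omega

theorem cand_phi_le (a : ℤ) (k p : ℕ) (o : ℤ) (ho : o.natAbs = 2*p+1) :
    φZ (cand a (k + 2*p)) ≤ φZ (cand a k) + φZ o := by
  unfold cand φZ
  split_ifs <;> simp only [Prod.mk_add_mk, Prod.mk_le_mk] <;> omega

theorem phiZ_zero : φZ (cand a 0) = 0 := by
  unfold cand φZ; split_ifs <;> simp_all <;> omega

theorem cand_phi_boundary (a q o x : ℤ) (p nm : ℕ) (ha : a ≠ 0) (ho : o.natAbs = 2*p+1)
    (hx : x = M q o) (hq1 : q.natAbs + 1 = a.natAbs + nm)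
    (hxa : x.natAbs = q.natAbs + o.natAbs)
    (hne : x ≠ (if 0 < a then ((a.natAbs + (nm + 2*p) : ℕ) : ℤ)
      else -((a.natAbs + (nm + 2*p) : ℕ) : ℤ))) :
    φZ (cand a (nm + 2*p + 1)) ≤ φZ (cand a nm) + φZ o := by
  unfold cand φZ M at *
  split_ifs at * <;> simp only [Prod.mk_add_mk, Prod.mk_le_mk] <;> omega

set_option maxHeartbeats 2000000 in
theorem stepZ (a q o x m : ℤ) (d₀ : ℕ × ℕ)
    (ho : o % 2 ≠ 0) (hx : x = M q o) (hlt : q.natAbs < x.natAbs)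
    (hadd : (M a m).natAbs = a.natAbs + m.natAbs) (hφ : φZ m ≤ d₀)
    (hq : q = M a m ∨ q.natAbs < (M a m).natAbs) :
    ∃ m', (M a m').natAbs = a.natAbs + m'.natAbs ∧ φZ m' ≤ d₀ + φZ o ∧
      (x = M a m' ∨ x.natAbs < (M a m').natAbs) := by
  have hd : x = q + o ∨ x = q - o := by
    rw [hx]; unfold M; split
    exacts [Or.inl rfl, Or.inr rfl]
  set p : ℕ := o.natAbs / 2 with hp
  have ho' : o.natAbs = 2*p + 1 := by omega
  by_cases ha : a = 0
  · subst ha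
    rcases hq with hq | hq
    · rw [M_zero_left] at hq
      subst hq
      refine ⟨M q o, ?_, ?_, Or.inl ?_⟩
      · rw [M_zero_left]; simp
      · exact (phiZ_subadd q o).trans (add_le_add_left hφ _)
      · rw [M_zero_left, hx]
    · rw [M_zero_left] at hq
      refine ⟨x, by rw [M_zero_left]; simp, ?_, Or.inl (M_zero_left x).symm⟩
      calc φZ x ≤ φZ q + φZ o := hx ▸ phiZ_subadd q o
        _ ≤ φZ m + φZ o := add_le_add_left (phiZ_mono hq) _
        _ ≤ d₀ + φZ o := add_le_add_left hφ _
  · rcases hq with hq | hq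
    · by_cases hR : x.natAbs = q.natAbs + o.natAbs
      · refine ⟨M m o, ?_, (phiZ_subadd m o).trans (add_le_add_left hφ _), Or.inl ?_⟩
        · have h1 := natAbs_M_le a (M m o)
          have h2 := natAbs_M_le m o
          have hX : x = M a (M m o) := by rw [hx, hq, M_assoc]
          have hq' : q.natAbs = a.natAbs + m.natAbs := by rw [hq, hadd]
          omega
        · rw [hx, hq, M_assoc]
      · refine ⟨cand a (o.natAbs - 1), (cand_add a ha _).1, ?_, Or.inr ?_⟩
        · calc φZ (cand a (o.natAbs - 1)) = φZ (cand a (0 + 2*p)) := by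
                rw [show (0 + 2*p : ℕ) = o.natAbs - 1 by omega]
            _ ≤ φZ (cand a 0) + φZ o := cand_phi_le a 0 p o ho'
            _ = φZ o := by rw [phiZ_zero, zero_add]
            _ ≤ d₀ + φZ o := le_add_self
        · have hM := (cand_add a ha (o.natAbs - 1)).1
          have hK := (cand_add a ha (o.natAbs - 1)).2
          have hq' : q.natAbs = a.natAbs + m.natAbs := by rw [hq, hadd]
          omega
    · rw [hadd] at hq
      have hm : m = cand a m.natAbs := eq_cand a m ha hadd
      set nm := m.natAbs with hnm
      by_cases hbig : x.natAbs < a.natAbs + nm + 2*p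
      · refine ⟨cand a (nm + 2*p), (cand_add a ha _).1, ?_, Or.inr ?_⟩
        · calc φZ (cand a (nm + 2*p)) ≤ φZ (cand a nm) + φZ o := cand_phi_le a nm p o ho'
            _ = φZ m + φZ o := by rw [← hm]
            _ ≤ d₀ + φZ o := add_le_add_left hφ _
        · have hM := (cand_add a ha (nm + 2*p)).1
          have hK := (cand_add a ha (nm + 2*p)).2
          omega
      · have hxa : x.natAbs = q.natAbs + o.natAbs ∧ q.natAbs + 1 = a.natAbs + nm := by omega
        by_cases hsame : x = (if 0 < a then ((a.natAbs + (nm + 2*p) : ℕ) : ℤ)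
            else -((a.natAbs + (nm + 2*p) : ℕ) : ℤ))
        · refine ⟨cand a (nm + 2*p), (cand_add a ha _).1, ?_, Or.inl ?_⟩
          · calc φZ (cand a (nm + 2*p)) ≤ φZ (cand a nm) + φZ o := cand_phi_le a nm p o ho'
              _ = φZ m + φZ o := by rw [← hm]
              _ ≤ d₀ + φZ o := add_le_add_left hφ _
          · rw [cand_M a ha, ← hsame]
        · refine ⟨cand a (nm + 2*p + 1), (cand_add a ha _).1, ?_, Or.inr ?_⟩
          · calc φZ (cand a (nm + 2*p + 1)) ≤ φZ (cand a nm) + φZ o :=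
                cand_phi_boundary a q o x p nm ha ho' hx hxa.2 hxa.1 hsame
              _ = φZ m + φZ o := by rw [← hm]
              _ ≤ d₀ + φZ o := add_le_add_left hφ _
          · have hM := (cand_add a ha (nm + 2*p + 1)).1
            have hK := (cand_add a ha (nm + 2*p + 1)).2
            omega

end Arith
section Main

variable {cs : CoxeterSystem Mmat Dinf}

theorem phiZ_zero' : φZ 0 ≤ 0 := by decide

theorem chain_witness (h0 : cs.simple 0 = .sr 0) (h1 : cs.simple 1 = .sr 1)
    {u v : Dinf} {d₀ : ℕ × ℕ} (hc : Chain cs u v d₀) :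
    ∃ w : Dinf, cLength (u * w) = cLength u + cLength w ∧ φ w ≤ d₀ ∧
      (v = u * w ∨ cLength v < cLength (u * w)) := by
  induction hc with
  | refl =>
    refine ⟨1, ?_, ?_, Or.inl (mul_one _).symm⟩
    · rw [mul_one, cLength_one]; omega
    · rw [φ_eq, N_one]; exact phiZ_zero'
  | @step v' x d α hc' he hlt ih =>
    obtain ⟨w₀, hw1, hw2, hw3⟩ := ih
    obtain ⟨t, hrefl, hφt, hxe⟩ := he
    have ho : N t % 2 ≠ 0 := N_E_odd hrefl
    have hx : N x = M (N v') (N t) := by rw [hxe, N_mul]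
    have hlt' : (N v').natAbs < (N x).natAbs := by
      rw [length_eq cs h0 h1, length_eq cs h0 h1, cLength_eq, cLength_eq] at hlt
      exact hlt
    have hadd : (M (N u) (N w₀)).natAbs = (N u).natAbs + (N w₀).natAbs := by
      rw [← N_mul, ← cLength_eq, ← cLength_eq, ← cLength_eq]
      exact hw1
    have hφ : φZ (N w₀) ≤ d := by rw [← φ_eq]; exact hw2
    have hq : N v' = M (N u) (N w₀) ∨ (N v').natAbs < (M (N u) (N w₀)).natAbs := by
      rcases hw3 with h | h
      · exact Or.inl (by rw [h, N_mul])
      · right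
        rw [← N_mul, ← cLength_eq, ← cLength_eq]
        exact h
    obtain ⟨m', hm1, hm2, hm3⟩ :=
      stepZ (N u) (N v') (N t) (N x) (N w₀) d ho hx hlt' hadd hφ hq
    refine ⟨E m', ?_, ?_, ?_⟩
    · rw [cLength_eq, cLength_eq, cLength_eq, N_mul, N_E]
      exact hm1
    · rw [φ_eq, N_E]
      have : α = φZ (N t) := by rw [← φ_eq, hφt]
      rw [this]
      exact hm2
    · rcases hm3 with h | h
      · exact Or.inl (N_inj (by rw [N_mul, N_E, h]))
      · right
        rw [cLength_eq, cLength_eq, N_mul, N_E]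
        exact h

/-- The coordinate of the longest element of `A_d(u)`. -/
def topJ (a : ℤ) (d : ℕ × ℕ) : ℤ :=
  if (if a % 2 = 0 then 0 < a else a < 0) ∨
      (a = 0 ∧ (if d.2 ≤ d.1 then 2*d.2 else 2*d.1+1) ≤ (if d.1 ≤ d.2 then 2*d.1 else 2*d.2+1))
  then ((if d.1 ≤ d.2 then 2*d.1 else 2*d.2+1 : ℕ) : ℤ)
  else -((if d.2 ≤ d.1 then 2*d.2 else 2*d.1+1 : ℕ) : ℤ)

theorem topJ_add (a : ℤ) (d : ℕ × ℕ) :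
    (M a (topJ a d)).natAbs = a.natAbs + (topJ a d).natAbs := by
  obtain ⟨d1, d2⟩ := d
  unfold topJ M
  split_ifs <;> omega

theorem topJ_phi (a : ℤ) (d : ℕ × ℕ) : φZ (topJ a d) ≤ d := by
  obtain ⟨d1, d2⟩ := d
  unfold topJ φZ
  split_ifs <;> simp only [Prod.mk_le_mk] <;> constructor <;> omega

theorem le_topJ (a j : ℤ) (d : ℕ × ℕ) (hj : (M a j).natAbs = a.natAbs + j.natAbs)
    (hφ : φZ j ≤ d) : j.natAbs ≤ (topJ a d).natAbs := by
  obtain ⟨d1, d2⟩ := d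
  unfold topJ φZ M at *
  split_ifs at * <;> simp only [Prod.mk_le_mk] at hφ <;> omega

end Main
/-- If there is an increasing chain of degree `d' ≤ d` from `u` to `v`, then
there is a Bruhat-maximal element `w` of `A_d(u)` with `v ≤ u * w`. -/
theorem stmt15 (cs : CoxeterSystem Mmat Dinf)
    (h0 : cs.simple 0 = sr 0) (h1 : cs.simple 1 = sr 1)
    (u v : Dinf) (d d' : ℕ × ℕ) (hle : d' ≤ d) (hc : Chain cs u v d') :
    ∃ w, IsMaximalIn cs w (Ad cs u d) ∧ BruhatLE cs v (u * w) := by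
  obtain ⟨w₀, hw1, hw2, hw3⟩ := chain_witness h0 h1 hc
  have hw2d : φ w₀ ≤ d := hw2.trans hle
  -- membership in Ad in terms of coordinates
  have memAd : ∀ g : Dinf, g ∈ Ad cs u d ↔
      ((M (N u) (N g)).natAbs = (N u).natAbs + (N g).natAbs ∧ φZ (N g) ≤ d) := by
    intro g
    constructor
    · rintro ⟨hg1, hg2⟩
      refine ⟨?_, by rw [← φ_eq]; exact hg2⟩
      rw [length_eq cs h0 h1, length_eq cs h0 h1, length_eq cs h0 h1,
        cLength_eq, cLength_eq, cLength_eq, N_mul] at hg1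
      exact hg1
    · rintro ⟨hg1, hg2⟩
      constructor
      · rw [length_eq cs h0 h1, length_eq cs h0 h1, length_eq cs h0 h1,
          cLength_eq, cLength_eq, cLength_eq, N_mul]
        exact hg1
      · rw [φ_eq]; exact hg2
  have hw₀Ad : w₀ ∈ Ad cs u d := by
    rw [memAd]
    constructor
    · rw [← N_mul, ← cLength_eq, ← cLength_eq, ← cLength_eq]; exact hw1
    · rw [← φ_eq]; exact hw2d
  set T : ℤ := topJ (N u) d with hT
  have hTAd : E T ∈ Ad cs u d := by
    rw [memAd, N_E]
    exact ⟨topJ_add _ _, topJ_phi _ _⟩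
  -- any member of Ad has length at most |T|
  have hmax : ∀ g ∈ Ad cs u d, cLength g ≤ T.natAbs := by
    intro g hg
    rw [memAd] at hg
    rw [cLength_eq]
    exact le_topJ _ _ _ hg.1 hg.2
  by_cases hwtop : cLength w₀ = T.natAbs
  · -- w₀ itself is maximal
    refine ⟨w₀, ⟨hw₀Ad, fun v' hv' => not_bruhatLT h0 h1 (by rw [hwtop]; exact hmax v' hv')⟩,
      bruhatLE_of h0 h1 hw3⟩
  · -- use the top element
    have hElen : cLength (E T) = T.natAbs := by rw [cLength_eq, N_E]
    refine ⟨E T, ⟨hTAd, fun v' hv' => not_bruhatLT h0 h1 (by rw [hElen]; exact hmax v' hv')⟩,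
      bruhatLE_of h0 h1 (Or.inr ?_)⟩
    have hw₀le : cLength w₀ < T.natAbs := lt_of_le_of_ne (hmax w₀ hw₀Ad) hwtop
    have hET1 : cLength (u * E T) = cLength u + T.natAbs := by
      rw [cLength_eq, cLength_eq, N_mul, N_E]
      exact topJ_add _ _
    have hvle : cLength v ≤ cLength (u * w₀) := by
      rcases hw3 with rfl | h
      · exact le_rfl
      · exact h.le
    rw [hw1] at hvle
    omega
end
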